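/- arXiv:2502.03156 — 4 statements merged into one kernel-verified Lean document; each statement's English description precedes it below -/
import Mathlib

section
/- Conversely, if the weights w are fixed and strictly positive and the covariate-averaged bound L̄ is sharp for θ, and the conditional bounds {L_s} are pointwise valid, then {L_s} is uniformly sharp: for every Q ∈ 𝒪 and ε > 0 there exists a single P with o(P) = Q such that θ_s(P) < L_s(q_s(Q)) + ε/min_s w(s) for every s (in particular, θ_s(P) can be made simultaneously arbitrarily close to L_s(q_s(Q)) for all s). -/
/-- Conversely, with fixed strictly positive weights, sharpness of the
covariate-averaged bound (together with pointwise validity) implies uniform sharpness,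
with tolerance ε / min_s w(s). -/
theorem averaged_sharp_implies_uniform_sharp
    {S : Type} [Fintype S] [Nonempty S]
    {Dist : Type}                    -- underlying distributions 𝒫
    {Obs : Type}                     -- full observation space 𝒪
    {ObsS : S → Type}                -- conditional observation spaces 𝒪_s
    (w : S → ℝ)                      -- fixed covariate weights
    (hw_pos : ∀ s, 0 < w s)
    (hw_sum : ∑ s, w s = 1)
    (o : Dist → Obs)
    (qs : ∀ s : S, Obs → ObsS s)
    (θs : S → Dist → ℝ)
    (θ : Dist → ℝ)
    (hθ : ∀ P, θ P = ∑ s, θs s P * w s)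
    (L : ∀ s : S, ObsS s → ℝ)
    (hvalid : ∀ (P : Dist) (s : S), L s (qs s (o P)) ≤ θs s P)  -- pointwise validity
    (Lbar : Obs → ℝ)
    (hLbar : ∀ Q : Obs, Lbar Q = ∑ s, L s (qs s Q) * w s)
    (hsharp : ∀ (Q : Obs) (ε : ℝ), 0 < ε →
      ∃ P : Dist, o P = Q ∧ θ P < Lbar Q + ε) :
    ∀ (Q : Obs) (ε : ℝ), 0 < ε →
      ∃ P : Dist, o P = Q ∧
        ∀ s : S, θs s P < L s (qs s Q) + ε / (Finset.univ.inf' Finset.univ_nonempty w) := by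
  intro Q ε hε
  set m : ℝ := Finset.univ.inf' Finset.univ_nonempty w with hm
  have hm_pos : 0 < m := by
    obtain ⟨t, _, ht⟩ := Finset.exists_mem_eq_inf' (Finset.univ_nonempty) w
    rw [hm, ht]; exact hw_pos t
  obtain ⟨P, hPQ, hPθ⟩ := hsharp Q ε hε
  refine ⟨P, hPQ, fun t => ?_⟩
  by_contra hcon
  push_neg at hcon
  have hterm : ∀ s, 0 ≤ (θs s P - L s (qs s Q)) * w s := fun s => by
    have := hvalid P s
    rw [hPQ] at this
    exact mul_nonneg (by linarith) (hw_pos s).le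
  have hmt : m ≤ w t := Finset.inf'_le w (Finset.mem_univ t)
  have key : ε ≤ ∑ s, (θs s P - L s (qs s Q)) * w s := by
    calc ε = (ε / m) * m := by field_simp
    _ ≤ (θs t P - L t (qs t Q)) * w t := by
        apply mul_le_mul (by linarith) hmt hm_pos.le
        linarith [div_pos hε hm_pos]
    _ ≤ ∑ s, (θs s P - L s (qs s Q)) * w s :=
        Finset.single_le_sum (fun s _ => hterm s) (Finset.mem_univ t)
  have : θ P - Lbar Q = ∑ s, (θs s P - L s (qs s Q)) * w s := by
    rw [hθ, hLbar, ← Finset.sum_sub_distrib]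
    exact Finset.sum_congr rfl (fun s _ => by ring)
  linarith
end

section
/- The bound L(P) = −P(X=0,Y=1) − P(X=1,Y=0) on the causal risk difference is sharp: for any observed joint distribution of (X,Y) on {0,1}², there exists a joint distribution of (X, Y₀, Y₁) consistent with the observed distribution (i.e., with Y = Y_X having the given joint law with X) such that E[Y₁] − E[Y₀] = −P(X=0,Y=1) − P(X=1,Y=0). -/
/-- Sharpness of the bound −P(X=0,Y=1) − P(X=1,Y=0) on the causal risk
difference: any observed joint pmf of (X,Y) on {0,1}² extends to a compatible joint pmf of
(X, Y₀, Y₁) attaining the bound. -/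
theorem confounded_lower_bound_sharp
    (p : Bool × Bool → ℝ)                 -- observed pmf of (X, Y)
    (hp_nonneg : ∀ v, 0 ≤ p v)
    (hp_sum : ∑ v, p v = 1) :
    ∃ q : Bool × Bool × Bool → ℝ,         -- counterfactual pmf of (X, Y₀, Y₁)
      (∀ v, 0 ≤ q v) ∧ (∑ v, q v = 1) ∧
      -- compatibility: the induced law of (X, Y) with Y = Y_X equals p
      (∀ x y : Bool,
        (∑ y0, ∑ y1, if (if x then y1 else y0) = y then q (x, y0, y1) else 0) = p (x, y)) ∧
      -- the causal risk difference attains the lower bound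
      ((∑ v : Bool × Bool × Bool, if v.2.2 then q v else 0) -
       (∑ v : Bool × Bool × Bool, if v.2.1 then q v else 0)
        = - p (false, true) - p (true, false)) := by
  refine ⟨fun v => if v.1 then (if v.2.1 then p (true, v.2.2) else 0)
      else (if v.2.2 then 0 else p (false, v.2.1)), ?_, ?_, ?_, ?_⟩
  · rintro ⟨x, y0, y1⟩
    cases x <;> cases y0 <;> cases y1 <;> simp [hp_nonneg]
  · simp only [Fintype.sum_prod_type, Fintype.sum_bool] at hp_sum ⊢
    simp; linarith
  · intro x y
    cases x <;> cases y <;>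
      simp only [Fintype.sum_prod_type, Fintype.sum_bool] <;> simp
  · simp only [Fintype.sum_prod_type, Fintype.sum_bool] at hp_sum ⊢
    simp; linarith
end

section
/- In the binary IV setting with a binary covariate S independent of Z within each stratum having instrument validity, the conditional Balke–Pearl lower bound on E[Y(0)] given S = s is valid: max of the four expressions { p_{10.1s}, −p_{00.0s}−p_{01.0s}+p_{10.1s}+p_{01.1s}, p_{10.0s}+p_{01.0s}−p_{00.1s}−p_{01.1s}, p_{10.0s} } is ≤ P(Y(0)=1 | S=s), where p_{yx.zs} = P(Y=y, X=x | Z=z, S=s). -/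
/-- Probability of a (Boolean) event under a pmf on a finite space. -/
noncomputable def pr {Ω : Type} [Fintype Ω] (μ : Ω → ℝ) (A : Ω → Bool) : ℝ :=
  ∑ ω, if A ω then μ ω else 0

/-- Conditional probability p_{yx.zs} = P(Y=y, X=x | Z=z, S=s). -/
noncomputable def condp {Ω : Type} [Fintype Ω] (μ : Ω → ℝ) (Z X Y Sc : Ω → Bool)
    (s y x z : Bool) : ℝ :=
  pr μ (fun ω => (Y ω == y) && (X ω == x) && (Z ω == z) && (Sc ω == s)) /
    pr μ (fun ω => (Z ω == z) && (Sc ω == s))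

namespace BPaux

variable {Ω : Type} [Fintype Ω]

lemma pr_nonneg (μ : Ω → ℝ) (h : ∀ ω, 0 ≤ μ ω) (A : Ω → Bool) : 0 ≤ pr μ A :=
  Finset.sum_nonneg fun ω _ => by by_cases h' : A ω <;> simp [h', h ω]

lemma pr_congr (μ : Ω → ℝ) {A B : Ω → Bool} (h : ∀ ω, A ω = B ω) :
    pr μ A = pr μ B := by
  unfold pr; exact Finset.sum_congr rfl fun ω _ => by rw [h ω]

lemma pr_const_and (μ : Ω → ℝ) (c : Bool) (A : Ω → Bool) :
    pr μ (fun ω => c && A ω) = if c then pr μ A else 0 := by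
  cases c <;> simp [pr]

lemma pr_decomp {τ : Type} [Fintype τ] [DecidableEq τ] (μ : Ω → ℝ)
    (f : Ω → τ) (A : Ω → Bool) :
    pr μ A = ∑ t, pr μ (fun ω => A ω && decide (f ω = t)) := by
  unfold pr
  rw [Finset.sum_comm]
  refine Finset.sum_congr rfl fun ω _ => ?_
  by_cases hA : A ω
  · simp only [hA, Bool.true_and, if_pos]
    have : ∀ t, (if decide (f ω = t) = true then μ ω else 0) =
        (if f ω = t then μ ω else 0) := fun t => by simp
    rw [Finset.sum_congr rfl fun t _ => this t]
    simp
  · simp [hA]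

lemma bool_key : ∀ (zv a' b' c' d' sv a b c d y x z s : Bool),
    ((((((if (if zv then d' else c') then b' else a') == y) &&
        ((if zv then d' else c') == x)) && (zv == z)) && (sv == s)) &&
      decide ((a', b', c', d') = (a, b, c, d)))
    = ((decide (x = (if z then d else c) ∧ y = (if x then b else a))) &&
      ((((((zv == z) && (a' == a)) && (b' == b)) && (c' == c)) && (d' == d)) && (sv == s))) := by
  decide

lemma bool_key2 : ∀ (a' b' c' d' sv a b c d s : Bool),
    (((a' == true) && (sv == s)) && decide ((a', b', c', d') = (a, b, c, d)))
    = ((decide (a = true)) &&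
      (((((a' == a) && (b' == b)) && (c' == c)) && (d' == d)) && (sv == s))) := by
  decide

lemma bool_key3 : ∀ (a' b' c' d' sv a b c d s : Bool),
    ((sv == s) && decide ((a', b', c', d') = (a, b, c, d)))
    = (((((a' == a) && (b' == b)) && (c' == c)) && (d' == d)) && (sv == s)) := by
  decide

set_option maxHeartbeats 1000000 in
lemma final (q : Bool × Bool × Bool × Bool → ℝ) (hq : ∀ t, 0 ≤ q t)
    (prS RY0 : ℝ) (c : Bool → Bool → Bool → ℝ)
    (hprS : 0 < prS)
    (hR : RY0 = ∑ t, if t.1 = true then q t else 0)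
    (hc : ∀ y x z : Bool, c y x z * prS =
      ∑ t : Bool × Bool × Bool × Bool,
        if (x = (if z then t.2.2.2 else t.2.2.1) ∧ y = (if x then t.2.1 else t.1))
        then q t else 0) :
    max
      (max (c true false true)
        (- c false false false - c false true false + c true false true + c false true true))
      (max (c true false false + c false true false - c false false true - c false true true)
        (c true false false))
    ≤ RY0 / prS := by
  have e1 := hc true false true
  have e2 := hc false false false
  have e3 := hc false true false
  have e4 := hc false true true
  have e5 := hc true false false
  have e6 := hc false false true
  simp only [Fintype.sum_prod_type, Fintype.sum_bool] at e1 e2 e3 e4 e5 e6 hR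
  simp at e1 e2 e3 e4 e5 e6 hR
  simp only [max_le_iff]
  have hqs : ∀ a b c d : Bool, 0 ≤ q (a, b, c, d) := fun a b c d => hq _
  refine ⟨⟨?_, ?_⟩, ?_, ?_⟩ <;>
    rw [le_div_iff₀ hprS] <;>
    linarith [hqs true true true true, hqs true true true false, hqs true true false true,
      hqs true true false false, hqs true false true true, hqs true false true false,
      hqs true false false true, hqs true false false false, hqs false true true true,
      hqs false true true false, hqs false true false true, hqs false true false false,
      hqs false false true true, hqs false false true false, hqs false false false true,
      hqs false false false false, e1, e2, e3, e4, e5, e6]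

end BPaux

/-- validity of the conditional Balke–Pearl lower bound on
P(Y(0)=1 | S=s) in the binary IV setting with a binary covariate S. -/
theorem conditional_balke_pearl_valid
    {Ω : Type} [Fintype Ω]
    (μ : Ω → ℝ)
    (hμ_nonneg : ∀ ω, 0 ≤ μ ω)
    (hμ_sum : ∑ ω, μ ω = 1)
    (Z X Y Sc Y0 Y1 X0 X1 : Ω → Bool)
    (s : Bool)
    (hS_pos : 0 < pr μ (fun ω => Sc ω == s))
    (hZS_pos : ∀ z : Bool, 0 < pr μ (fun ω => (Z ω == z) && (Sc ω == s)))
    -- consistency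
    (hXcons : ∀ ω, X ω = if Z ω then X1 ω else X0 ω)
    (hYcons : ∀ ω, Y ω = if X ω then Y1 ω else Y0 ω)
    -- conditional instrument validity: Z ⫫ (Y(0),Y(1),X(0),X(1)) | S = s
    (hindep : ∀ z y0 y1 x0 x1 : Bool,
      pr μ (fun ω => (Z ω == z) && (Y0 ω == y0) && (Y1 ω == y1) &&
            (X0 ω == x0) && (X1 ω == x1) && (Sc ω == s)) *
        pr μ (fun ω => Sc ω == s) =
      pr μ (fun ω => (Z ω == z) && (Sc ω == s)) *
        pr μ (fun ω => (Y0 ω == y0) && (Y1 ω == y1) &&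
            (X0 ω == x0) && (X1 ω == x1) && (Sc ω == s))) :
    max
      (max (condp μ Z X Y Sc s true false true)
        (- condp μ Z X Y Sc s false false false - condp μ Z X Y Sc s false true false
          + condp μ Z X Y Sc s true false true + condp μ Z X Y Sc s false true true))
      (max (condp μ Z X Y Sc s true false false + condp μ Z X Y Sc s false true false
          - condp μ Z X Y Sc s false false true - condp μ Z X Y Sc s false true true)
        (condp μ Z X Y Sc s true false false))
    ≤ pr μ (fun ω => (Y0 ω == true) && (Sc ω == s)) / pr μ (fun ω => Sc ω == s) := by
  classical
  refine BPaux.final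
    (fun t => pr μ (fun ω => (Y0 ω == t.1) && (Y1 ω == t.2.1) && (X0 ω == t.2.2.1) &&
        (X1 ω == t.2.2.2) && (Sc ω == s)))
    (fun t => BPaux.pr_nonneg μ hμ_nonneg _)
    (pr μ (fun ω => Sc ω == s))
    (pr μ (fun ω => (Y0 ω == true) && (Sc ω == s)))
    (fun y x z => condp μ Z X Y Sc s y x z)
    hS_pos ?_ ?_
  · -- RY0 decomposition
    rw [BPaux.pr_decomp μ (fun ω => (Y0 ω, Y1 ω, X0 ω, X1 ω))
        (fun ω => (Y0 ω == true) && (Sc ω == s))]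
    refine Finset.sum_congr rfl fun t _ => ?_
    have hpoint : ∀ ω : Ω,
        (((Y0 ω == true) && (Sc ω == s)) &&
          decide ((Y0 ω, Y1 ω, X0 ω, X1 ω) = t))
        = ((decide (t.1 = true)) &&
          ((Y0 ω == t.1) && (Y1 ω == t.2.1) && (X0 ω == t.2.2.1) &&
            (X1 ω == t.2.2.2) && (Sc ω == s))) := fun ω =>
      BPaux.bool_key2 (Y0 ω) (Y1 ω) (X0 ω) (X1 ω) (Sc ω) t.1 t.2.1 t.2.2.1 t.2.2.2 s
    rw [BPaux.pr_congr μ hpoint, BPaux.pr_const_and]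
    try simp only [decide_eq_true_eq]
  · -- key identity for condp
    intro y x z
    have hrz : pr μ (fun ω => (Z ω == z) && (Sc ω == s)) ≠ 0 := ne_of_gt (hZS_pos z)
    have hN : pr μ (fun ω => (Y ω == y) && (X ω == x) && (Z ω == z) && (Sc ω == s)) =
        ∑ t : Bool × Bool × Bool × Bool,
          if (x = (if z then t.2.2.2 else t.2.2.1) ∧ y = (if x then t.2.1 else t.1)) then
            pr μ (fun ω => (Z ω == z) && (Y0 ω == t.1) && (Y1 ω == t.2.1) &&
              (X0 ω == t.2.2.1) && (X1 ω == t.2.2.2) && (Sc ω == s)) else 0 := by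
      rw [BPaux.pr_decomp μ (fun ω => (Y0 ω, Y1 ω, X0 ω, X1 ω))
          (fun ω => (Y ω == y) && (X ω == x) && (Z ω == z) && (Sc ω == s))]
      refine Finset.sum_congr rfl fun t _ => ?_
      have hpoint : ∀ ω : Ω,
          (((Y ω == y) && (X ω == x) && (Z ω == z) && (Sc ω == s)) &&
            decide ((Y0 ω, Y1 ω, X0 ω, X1 ω) = t))
          = ((decide (x = (if z then t.2.2.2 else t.2.2.1) ∧
                y = (if x then t.2.1 else t.1))) &&
            ((Z ω == z) && (Y0 ω == t.1) && (Y1 ω == t.2.1) && (X0 ω == t.2.2.1) &&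
              (X1 ω == t.2.2.2) && (Sc ω == s))) := by
        intro ω
        rw [hYcons ω, hXcons ω]
        exact BPaux.bool_key (Z ω) (Y0 ω) (Y1 ω) (X0 ω) (X1 ω) (Sc ω)
          t.1 t.2.1 t.2.2.1 t.2.2.2 y x z s
      rw [BPaux.pr_congr μ hpoint, BPaux.pr_const_and]
      try simp only [decide_eq_true_eq]
    have hNP : pr μ (fun ω => (Y ω == y) && (X ω == x) && (Z ω == z) && (Sc ω == s)) *
        pr μ (fun ω => Sc ω == s) =
        pr μ (fun ω => (Z ω == z) && (Sc ω == s)) *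
          ∑ t : Bool × Bool × Bool × Bool,
            if (x = (if z then t.2.2.2 else t.2.2.1) ∧ y = (if x then t.2.1 else t.1))
            then pr μ (fun ω => (Y0 ω == t.1) && (Y1 ω == t.2.1) && (X0 ω == t.2.2.1) &&
              (X1 ω == t.2.2.2) && (Sc ω == s)) else 0 := by
      rw [hN, Finset.sum_mul, Finset.mul_sum]
      refine Finset.sum_congr rfl fun t _ => ?_
      by_cases hco : (x = (if z then t.2.2.2 else t.2.2.1) ∧ y = (if x then t.2.1 else t.1))
      · rw [if_pos hco, if_pos hco]
        exact hindep z t.1 t.2.1 t.2.2.1 t.2.2.2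
      · rw [if_neg hco, if_neg hco, zero_mul, mul_zero]
    show condp μ Z X Y Sc s y x z * pr μ (fun ω => Sc ω == s) = _
    unfold condp
    rw [div_mul_eq_mul_div, hNP, mul_div_cancel_left₀ _ hrz]
end

section
/- Suppose S ⫫ Z (the covariate is independent of the instrument). Then for all y, x, z ∈ {0,1}: P(Y=y, X=x | Z=z) = Σ_s P(Y=y, X=x | Z=z, S=s)·P(S=s). Consequently, each term of the marginal Balke–Pearl bound set A^{−S} equals the S-expectation of the corresponding term of the conditional bound sets A^{|s}, and therefore max(A^{−S}) = max(E_S[A^{|S}]) ≤ E_S[max(A^{|S})]; i.e., the covariate-averaged Balke–Pearl lower bound is at least as large as the marginal Balke–Pearl lower bound. -/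
/-- Marginal conditional probability p_{yx.z} = P(Y=y, X=x | Z=z). -/
noncomputable def pm {Ω : Type} [Fintype Ω] (μ : Ω → ℝ) (Z X Y : Ω → Bool)
    (y x z : Bool) : ℝ :=
  pr μ (fun ω => (Y ω == y) && (X ω == x) && (Z ω == z)) / pr μ (fun ω => Z ω == z)

/-- Covariate-conditional probability p_{yx.zs} = P(Y=y, X=x | Z=z, S=s). -/
noncomputable def pc {Ω : Type} [Fintype Ω] (μ : Ω → ℝ) (Z X Y Sc : Ω → Bool)
    (s y x z : Bool) : ℝ :=
  pr μ (fun ω => (Y ω == y) && (X ω == x) && (Z ω == z) && (Sc ω == s)) /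
    pr μ (fun ω => (Z ω == z) && (Sc ω == s))

section Probability

variable {Ω : Type} [Fintype Ω] (μ : Ω → ℝ)

lemma pr_nonneg (hμ : ∀ ω, 0 ≤ μ ω) (A : Ω → Bool) : 0 ≤ pr μ A :=
  Finset.sum_nonneg fun ω _ => by split <;> simp [hμ ω]

lemma pr_eq_sum_pr_and (A S : Ω → Bool) :
    pr μ A = ∑ s : Bool, pr μ (fun ω => A ω && (S ω == s)) := by
  unfold pr
  rw [Finset.sum_comm]
  refine Fintype.sum_congr _ _ fun ω => ?_
  cases hA : A ω <;> cases hS : S ω <;> simp [hA, hS]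

lemma pm_eq_sum_pc_mul_pr (Z X Y Sc : Ω → Bool) (z : Bool)
    (hpos : ∀ s : Bool, 0 < pr μ (fun ω => (Z ω == z) && (Sc ω == s)))
    (hindep : ∀ s : Bool,
      pr μ (fun ω => (Z ω == z) && (Sc ω == s)) =
        pr μ (fun ω => Z ω == z) * pr μ (fun ω => Sc ω == s))
    (y x : Bool) :
    pm μ Z X Y y x z = ∑ s : Bool, pc μ Z X Y Sc s y x z * pr μ (fun ω => Sc ω == s) := by
  unfold pm pc
  rw [pr_eq_sum_pr_and μ _ Sc, Finset.sum_div]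
  refine Fintype.sum_congr _ _ fun s => ?_
  have hprod := (hpos s).ne'
  rw [hindep s] at hprod ⊢
  obtain ⟨hZ, hS⟩ := mul_ne_zero_iff.mp hprod
  field_simp

end Probability

lemma max_sum_mul_le_sum_mul_max {ι : Type*} [Fintype ι] (w : ι → ℝ) (hw : ∀ i, 0 ≤ w i)
    (f g : ι → ℝ) :
    max (∑ i, w i * f i) (∑ i, w i * g i) ≤ ∑ i, w i * max (f i) (g i) :=
  max_le
    (Finset.sum_le_sum fun i _ => mul_le_mul_of_nonneg_left (le_max_left _ _) (hw i))
    (Finset.sum_le_sum fun i _ => mul_le_mul_of_nonneg_left (le_max_right _ _) (hw i))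

/-- `max A` for the Balke–Pearl bound set `A` built from the table `p y x z = p_{yx.z}`. -/
def balkePearlLowerBound (p : Bool → Bool → Bool → ℝ) : ℝ :=
  max
    (max (p true false true)
      (- p false false false - p false true false + p true false true + p false true true))
    (max (p true false false + p false true false - p false false true - p false true true)
      (p true false false))

lemma balkePearlLowerBound_sum_mul_le {ι : Type*} [Fintype ι] (w : ι → ℝ) (hw : ∀ i, 0 ≤ w i)
    (q : ι → Bool → Bool → Bool → ℝ) :
    balkePearlLowerBound (fun y x z => ∑ i, w i * q i y x z) ≤
      ∑ i, w i * balkePearlLowerBound (q i) := by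
  unfold balkePearlLowerBound
  simp only [← Finset.sum_neg_distrib, ← Finset.sum_sub_distrib, ← Finset.sum_add_distrib,
    ← mul_neg, ← mul_sub, ← mul_add]
  exact (max_le_max (max_sum_mul_le_sum_mul_max w hw _ _)
    (max_sum_mul_le_sum_mul_max w hw _ _)).trans (max_sum_mul_le_sum_mul_max w hw _ _)

theorem marginal_bp_le_averaged_bp_general
    {Ω : Type} [Fintype Ω]
    (μ : Ω → ℝ)
    (hμ_nonneg : ∀ ω, 0 ≤ μ ω)
    (Z X Y Sc : Ω → Bool)
    (hZS_pos : ∀ z s : Bool, 0 < pr μ (fun ω => (Z ω == z) && (Sc ω == s)))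
    -- independence S ⫫ Z
    (hindep : ∀ z s : Bool,
      pr μ (fun ω => (Z ω == z) && (Sc ω == s)) =
        pr μ (fun ω => Z ω == z) * pr μ (fun ω => Sc ω == s)) :
    (∀ y x z : Bool,
      pm μ Z X Y y x z = ∑ s : Bool, pc μ Z X Y Sc s y x z * pr μ (fun ω => Sc ω == s)) ∧
    max
      (max (pm μ Z X Y true false true)
        (- pm μ Z X Y false false false - pm μ Z X Y false true false
          + pm μ Z X Y true false true + pm μ Z X Y false true true))
      (max (pm μ Z X Y true false false + pm μ Z X Y false true false
          - pm μ Z X Y false false true - pm μ Z X Y false true true)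
        (pm μ Z X Y true false false))
    ≤ ∑ s : Bool, pr μ (fun ω => Sc ω == s) *
        max
          (max (pc μ Z X Y Sc s true false true)
            (- pc μ Z X Y Sc s false false false - pc μ Z X Y Sc s false true false
              + pc μ Z X Y Sc s true false true + pc μ Z X Y Sc s false true true))
          (max (pc μ Z X Y Sc s true false false + pc μ Z X Y Sc s false true false
              - pc μ Z X Y Sc s false false true - pc μ Z X Y Sc s false true true)
            (pc μ Z X Y Sc s true false false)) := by
  have havg : ∀ y x z : Bool,
      pm μ Z X Y y x z = ∑ s : Bool, pc μ Z X Y Sc s y x z * pr μ (fun ω => Sc ω == s) :=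
    fun y x z => pm_eq_sum_pc_mul_pr μ Z X Y Sc z (hZS_pos z) (hindep z) y x
  refine ⟨havg, ?_⟩
  have hpm : pm μ Z X Y =
      fun y x z => ∑ s : Bool, pr μ (fun ω => Sc ω == s) * pc μ Z X Y Sc s y x z := by
    funext y x z
    simp only [havg, mul_comm]
  change balkePearlLowerBound (pm μ Z X Y) ≤
    ∑ s : Bool, pr μ (fun ω => Sc ω == s) * balkePearlLowerBound (pc μ Z X Y Sc s)
  rw [hpm]
  exact balkePearlLowerBound_sum_mul_le _ (fun s => pr_nonneg μ hμ_nonneg _) _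

/-- if S ⫫ Z, each marginal probability p_{yx.z} is the S-average of the
conditional ones, and hence the marginal Balke–Pearl lower bound is at most the
covariate-averaged Balke–Pearl lower bound. -/
theorem marginal_bp_le_averaged_bp
    {Ω : Type} [Fintype Ω]
    (μ : Ω → ℝ)
    (hμ_nonneg : ∀ ω, 0 ≤ μ ω)
    (hμ_sum : ∑ ω, μ ω = 1)
    (Z X Y Sc : Ω → Bool)
    (hZS_pos : ∀ z s : Bool, 0 < pr μ (fun ω => (Z ω == z) && (Sc ω == s)))
    -- independence S ⫫ Z
    (hindep : ∀ z s : Bool,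
      pr μ (fun ω => (Z ω == z) && (Sc ω == s)) =
        pr μ (fun ω => Z ω == z) * pr μ (fun ω => Sc ω == s)) :
    (∀ y x z : Bool,
      pm μ Z X Y y x z = ∑ s : Bool, pc μ Z X Y Sc s y x z * pr μ (fun ω => Sc ω == s)) ∧
    max
      (max (pm μ Z X Y true false true)
        (- pm μ Z X Y false false false - pm μ Z X Y false true false
          + pm μ Z X Y true false true + pm μ Z X Y false true true))
      (max (pm μ Z X Y true false false + pm μ Z X Y false true false
          - pm μ Z X Y false false true - pm μ Z X Y false true true)
        (pm μ Z X Y true false false))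
    ≤ ∑ s : Bool, pr μ (fun ω => Sc ω == s) *
        max
          (max (pc μ Z X Y Sc s true false true)
            (- pc μ Z X Y Sc s false false false - pc μ Z X Y Sc s false true false
              + pc μ Z X Y Sc s true false true + pc μ Z X Y Sc s false true true))
          (max (pc μ Z X Y Sc s true false false + pc μ Z X Y Sc s false true false
              - pc μ Z X Y Sc s false false true - pc μ Z X Y Sc s false true true)
            (pc μ Z X Y Sc s true false false)) :=
  marginal_bp_le_averaged_bp_general μ hμ_nonneg Z X Y Sc hZS_pos hindep
end
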